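/- Let m, n ≥ 1, let q ∈ 𝔽[X]^m with q ≠ 0, and let p ∈ 𝔽[X]^n. There exists an m×n matrix A over L with ‖A‖_∞ < 1 satisfying qA = p if and only if ‖p‖_∞ < ‖q‖_∞. -/

import Mathlib

open MeasureTheory Filter Asymptotics
open scoped Classical

/-- The absolute value on `L`, the field of formal Laurent series in `X⁻¹` over
the finite field `F` with `k = Fintype.card F` elements (here realised as
`LaurentSeries F` in the variable `t = X⁻¹`): `‖x‖ = k ^ (-order x)`, `‖0‖ = 0`. -/
noncomputable def lnorm (F : Type*) [Field F] [Fintype F] (x : LaurentSeries F) : ℝ :=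
  if x = 0 then 0 else (Fintype.card F : ℝ) ^ (-x.order)

/-- The embedding of the polynomial ring `F[X]` into `L`, sending `X` to the
Laurent series with a single term of order `-1` (the element of norm `k`). -/
noncomputable def polyToL (F : Type*) [Field F] [Fintype F] (p : Polynomial F) :
    LaurentSeries F :=
  Polynomial.aeval (HahnSeries.single (-1 : ℤ) (1 : F)) p

/-- Sup norm `‖·‖_∞` of a vector over `L`. -/
noncomputable def vnorm (F : Type*) [Field F] [Fintype F] {ι : Type*}
    (v : ι → LaurentSeries F) : ℝ :=
  ⨆ i, lnorm F (v i)

/-- Sup norm `‖·‖_∞` of a vector of polynomials, viewed inside `L`. -/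
noncomputable def pvnorm (F : Type*) [Field F] [Fintype F] {ι : Type*}
    (q : ι → Polynomial F) : ℝ :=
  vnorm F fun i => polyToL F (q i)

/-- The row vector `q A ∈ L^n`, for `q ∈ F[X]^m` and an `m × n` matrix `A` over `L`. -/
noncomputable def rowMul (F : Type*) [Field F] [Fintype F] {m n : ℕ}
    (q : Fin m → Polynomial F) (A : Fin m → Fin n → LaurentSeries F) :
    Fin n → LaurentSeries F :=
  fun j => ∑ i, polyToL F (q i) * A i j

noncomputable instance (F : Type*) [Field F] [Fintype F] :
    MeasurableSpace (LaurentSeries F) := borel _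

/-! `lnorm` is the absolute value of a discrete valuation: it is multiplicative, ultrametric,
and takes no value strictly between `k⁻¹` and `1`. So if every entry of `A` has norm `< 1`,
every entry of `qA` has norm at most `‖q‖_∞ / k < ‖q‖_∞` (and `‖q‖_∞ > 0` since `q ≠ 0`).
Conversely, if `‖q i₀‖ = ‖q‖_∞ > ‖p‖_∞`, the matrix whose only nonzero row is
`p / q i₀` (in row `i₀`) has entries of norm `< 1` and satisfies `qA = p`. -/

section lnorm

variable {F : Type*} [Field F] [Fintype F]

lemma one_lt_card_real : (1 : ℝ) < Fintype.card F := by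
  exact_mod_cast Fintype.one_lt_card

@[simp]
lemma lnorm_zero : lnorm F 0 = 0 := if_pos rfl

lemma lnorm_of_ne_zero {x : LaurentSeries F} (hx : x ≠ 0) :
    lnorm F x = (Fintype.card F : ℝ) ^ (-x.order) := if_neg hx

lemma lnorm_pos {x : LaurentSeries F} (hx : x ≠ 0) : 0 < lnorm F x := by
  rw [lnorm_of_ne_zero hx]
  exact zpow_pos (zero_lt_one.trans one_lt_card_real) _

lemma lnorm_nonneg (x : LaurentSeries F) : 0 ≤ lnorm F x := by
  rcases eq_or_ne x 0 with rfl | hx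
  · exact lnorm_zero.ge
  · exact (lnorm_pos hx).le

lemma lnorm_pos_iff {x : LaurentSeries F} : 0 < lnorm F x ↔ x ≠ 0 :=
  ⟨fun h hx => by simp [hx] at h, lnorm_pos⟩

lemma lnorm_mul (x y : LaurentSeries F) : lnorm F (x * y) = lnorm F x * lnorm F y := by
  rcases eq_or_ne x 0 with rfl | hx
  · simp
  rcases eq_or_ne y 0 with rfl | hy
  · simp
  rw [lnorm_of_ne_zero hx, lnorm_of_ne_zero hy, lnorm_of_ne_zero (mul_ne_zero hx hy),
    HahnSeries.order_mul hx hy, neg_add, zpow_add₀ (zero_lt_one.trans one_lt_card_real).ne']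

lemma lnorm_div (x : LaurentSeries F) {y : LaurentSeries F} (hy : y ≠ 0) :
    lnorm F (x / y) = lnorm F x / lnorm F y := by
  rw [eq_div_iff (lnorm_pos hy).ne', ← lnorm_mul, div_mul_cancel₀ x hy]

lemma lnorm_mono_of_order_le {x y : LaurentSeries F} (hy : y ≠ 0) (h : y.order ≤ x.order) :
    lnorm F x ≤ lnorm F y := by
  rcases eq_or_ne x 0 with rfl | hx
  · exact lnorm_zero.trans_le (lnorm_nonneg y)
  rw [lnorm_of_ne_zero hx, lnorm_of_ne_zero hy]
  exact zpow_le_zpow_right₀ one_lt_card_real.le (neg_le_neg h)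

lemma isNonarchimedean_lnorm : IsNonarchimedean (lnorm F) := by
  intro x y
  rcases eq_or_ne x 0 with rfl | hx
  · simp
  rcases eq_or_ne y 0 with rfl | hy
  · simp
  by_cases hxy : x + y = 0
  · rw [hxy, lnorm_zero]
    exact le_max_of_le_left (lnorm_nonneg x)
  have hmin := HahnSeries.min_order_le_order_add (Γ := ℤ) hxy
  rcases le_total x.order y.order with h | h
  · exact le_max_of_le_left <| lnorm_mono_of_order_le hx <| by simpa [h] using hmin
  · exact le_max_of_le_right <| lnorm_mono_of_order_le hy <| by simpa [h] using hmin

lemma lnorm_sum_le {ι : Type*} (s : Finset ι) (f : ι → LaurentSeries F) {c : ℝ}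
    (hc : 0 ≤ c) (h : ∀ i ∈ s, lnorm F (f i) ≤ c) : lnorm F (∑ i ∈ s, f i) ≤ c :=
  Finset.sum_induction f (lnorm F · ≤ c)
    (fun _ _ hx hy => (isNonarchimedean_lnorm _ _).trans (max_le hx hy))
    (lnorm_zero.trans_le hc) h

lemma lnorm_le_inv_card_of_lt_one {x : LaurentSeries F} (hx : lnorm F x < 1) :
    lnorm F x ≤ (Fintype.card F : ℝ)⁻¹ := by
  rcases eq_or_ne x 0 with rfl | hx0
  · simp
  rw [lnorm_of_ne_zero hx0] at hx ⊢
  have : -x.order < 0 := by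
    simpa using (zpow_lt_zpow_iff_right₀ one_lt_card_real).mp (hx.trans_eq (zpow_zero _).symm)
  simpa using zpow_le_zpow_right₀ one_lt_card_real.le (show -x.order ≤ -1 by omega)

end lnorm

section vnorm

variable {F : Type*} [Field F] [Fintype F] {ι : Type*}

lemma lnorm_le_vnorm [Finite ι] (v : ι → LaurentSeries F) (i : ι) : lnorm F (v i) ≤ vnorm F v :=
  le_ciSup (f := fun i => lnorm F (v i)) (Set.finite_range _).bddAbove i

lemma vnorm_le {v : ι → LaurentSeries F} {c : ℝ} (hc : 0 ≤ c) (h : ∀ i, lnorm F (v i) ≤ c) :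
    vnorm F v ≤ c :=
  Real.iSup_le h hc

lemma exists_lnorm_eq_vnorm [Finite ι] [Nonempty ι] (v : ι → LaurentSeries F) :
    ∃ i, lnorm F (v i) = vnorm F v :=
  exists_eq_ciSup_of_finite

lemma vnorm_nonneg (v : ι → LaurentSeries F) : 0 ≤ vnorm F v :=
  Real.iSup_nonneg fun i => lnorm_nonneg (v i)

end vnorm

section polyToL

variable {F : Type*} [Field F] [Fintype F]

lemma polyToL_coeff_neg_natCast (p : Polynomial F) (j : ℕ) :
    (polyToL F p).coeff (-(j : ℤ)) = p.coeff j := by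
  rw [polyToL, Polynomial.aeval_eq_sum_range, HahnSeries.coeff_sum]
  simp [HahnSeries.single_pow, Algebra.smul_def, HahnSeries.algebraMap_apply',
    HahnSeries.coeff_single]
  exact fun h => (Polynomial.coeff_eq_zero_of_natDegree_lt h).symm

lemma polyToL_injective : Function.Injective (polyToL F) := by
  intro p q h
  ext j
  rw [← polyToL_coeff_neg_natCast, h, polyToL_coeff_neg_natCast]

lemma polyToL_ne_zero {p : Polynomial F} (hp : p ≠ 0) : polyToL F p ≠ 0 := by
  simpa [polyToL] using polyToL_injective.ne hp

lemma pvnorm_pos {ι : Type*} [Finite ι] {q : ι → Polynomial F} (hq : q ≠ 0) : 0 < pvnorm F q := by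
  obtain ⟨i, hi⟩ := Function.ne_iff.mp hq
  exact (lnorm_pos (polyToL_ne_zero hi)).trans_le (lnorm_le_vnorm (fun i => polyToL F (q i)) i)

end polyToL

section rowMul

variable {F : Type*} [Field F] [Fintype F] {m n : ℕ}

lemma vnorm_rowMul_le (q : Fin m → Polynomial F) {A : Fin m → Fin n → LaurentSeries F}
    (hA : ∀ i j, lnorm F (A i j) < 1) :
    vnorm F (rowMul F q A) ≤ pvnorm F q / Fintype.card F := by
  have hc : 0 ≤ pvnorm F q / Fintype.card F := div_nonneg (vnorm_nonneg _) (Nat.cast_nonneg _)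
  refine vnorm_le hc fun j => lnorm_sum_le _ _ hc fun i _ => ?_
  rw [lnorm_mul, div_eq_mul_inv]
  exact mul_le_mul (lnorm_le_vnorm (fun i => polyToL F (q i)) i)
    (lnorm_le_inv_card_of_lt_one (hA i j)) (lnorm_nonneg _) (vnorm_nonneg _)

lemma rowMul_pi_single (q : Fin m → Polynomial F) (i₀ : Fin m) (w : Fin n → LaurentSeries F)
    (j : Fin n) : rowMul F q (Pi.single i₀ w) j = polyToL F (q i₀) * w j := by
  simp [rowMul, Pi.single_apply, apply_ite (fun v : Fin n → LaurentSeries F => v j)]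

lemma exists_rowMul_eq_of_pvnorm_lt (q : Fin m → Polynomial F) (p : Fin n → Polynomial F)
    (h : pvnorm F p < pvnorm F q) :
    ∃ A : Fin m → Fin n → LaurentSeries F,
      (∀ i j, lnorm F (A i j) < 1) ∧ ∀ j, rowMul F q A j = polyToL F (p j) := by
  have hq : 0 < pvnorm F q := (vnorm_nonneg _).trans_lt h
  have : Nonempty (Fin m) := by
    by_contra h₀
    rw [not_nonempty_iff] at h₀
    simp [pvnorm, vnorm] at hq
  obtain ⟨i₀, hi₀⟩ : ∃ i, lnorm F (polyToL F (q i)) = pvnorm F q := exists_lnorm_eq_vnorm _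
  have hq₀ : polyToL F (q i₀) ≠ 0 := lnorm_pos_iff.mp (hi₀ ▸ hq)
  refine ⟨Pi.single i₀ fun j => polyToL F (p j) / polyToL F (q i₀), fun i j => ?_, fun j => ?_⟩
  · rcases eq_or_ne i i₀ with rfl | hi
    · rw [Pi.single_eq_same, lnorm_div _ hq₀, hi₀, div_lt_one hq]
      exact (lnorm_le_vnorm (fun j => polyToL F (p j)) j).trans_lt h
    · simp [Pi.single_eq_of_ne hi]
  · exact (rowMul_pi_single q i₀ _ j).trans (mul_div_cancel₀ _ hq₀)

end rowMul

theorem exists_matrix_in_unit_ball_iff_general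
    {F : Type*} [Field F] [Fintype F]
    (m n : ℕ)
    (q : Fin m → Polynomial F) (hq : q ≠ 0)
    (p : Fin n → Polynomial F) :
    (∃ A : Fin m → Fin n → LaurentSeries F,
        (∀ i j, lnorm F (A i j) < 1) ∧ ∀ j, rowMul F q A j = polyToL F (p j)) ↔
      pvnorm F p < pvnorm F q := by
  refine ⟨fun ⟨A, hA, hqA⟩ => ?_, exists_rowMul_eq_of_pvnorm_lt q p⟩
  have hp : pvnorm F p = vnorm F (rowMul F q A) := congrArg (vnorm F) (funext hqA).symm
  calc pvnorm F p ≤ pvnorm F q / Fintype.card F := hp ▸ vnorm_rowMul_le q hA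
    _ < pvnorm F q := div_lt_self (pvnorm_pos hq) one_lt_card_real

/-- For `m, n ≥ 1`, a nonzero `q ∈ F[X]^m` and `p ∈ F[X]^n`, there is an
`m × n` matrix `A` over `L` with `‖A‖_∞ < 1` and `q A = p` if and only if
`‖p‖_∞ < ‖q‖_∞`. -/
theorem exists_matrix_in_unit_ball_iff
    {F : Type*} [Field F] [Fintype F]
    (m n : ℕ) (hm : 1 ≤ m) (hn : 1 ≤ n)
    (q : Fin m → Polynomial F) (hq : q ≠ 0)
    (p : Fin n → Polynomial F) :
    (∃ A : Fin m → Fin n → LaurentSeries F,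
        (∀ i j, lnorm F (A i j) < 1) ∧ ∀ j, rowMul F q A j = polyToL F (p j)) ↔
      pvnorm F p < pvnorm F q :=
  exists_matrix_in_unit_ball_iff_general m n q hq p
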